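/- arXiv:2306.10631 — 2 statements merged into one kernel-verified Lean document; each statement's English description precedes it below -/
import Mathlib

section
/- Let k ≥ 1 and let G be a finite (s,k)-edge-connected graph with deg(s) ≤ 3 and at least two vertices other than s. Then for any two vertices x, y different from s, at most one of any collection of k pairwise edge-disjoint x–y paths in G passes through s; consequently the graph G − s is (k−1)-edge-connected. -/
/-
A path through `s` whose ends differ from `s` enters and leaves `s` by two distinct edges, so two
edge-disjoint such paths need four edges at `s`. Hence, when `deg(s) ≤ 3`, at most one path of an
edge-disjoint family between vertices other than `s` meets `s`; dropping it leaves `k - 1`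
edge-disjoint paths avoiding `s`, which are paths of `G − s`.
-/

universe u v

/-- A loopless multigraph on vertex type `V` with edge type `E`:
each edge `e` has two distinct endpoints `fst e` and `snd e`. -/
structure Multigraph (V : Type u) (E : Type v) where
  fst : E → V
  snd : E → V
  loopless : ∀ e, fst e ≠ snd e

namespace Multigraph

variable {V : Type u} {E : Type v}

/-- The edge `e` has endpoints `a` and `b`. -/
def Inc (G : Multigraph V E) (e : E) (a b : V) : Prop :=
  (G.fst e = a ∧ G.snd e = b) ∨ (G.fst e = b ∧ G.snd e = a)

/-- The edge `e` is incident with the vertex `s`. -/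
def IncVert (G : Multigraph V E) (s : V) (e : E) : Prop :=
  G.fst e = s ∨ G.snd e = s

/-- The degree of a vertex: the number of edges incident with it. -/
noncomputable def degree (G : Multigraph V E) (s : V) : ℕ :=
  {e : E | G.IncVert s e}.ncard

/-- A graph is locally finite if every vertex is incident with only finitely many edges. -/
def LocallyFinite (G : Multigraph V E) : Prop :=
  ∀ s : V, {e : E | G.IncVert s e}.Finite

/-- `δ(S)`: the set of edges with exactly one endpoint in `S`. -/
def edgeCut (G : Multigraph V E) (S : Set V) : Set E :=
  {e : E | (G.fst e ∈ S ∧ G.snd e ∉ S) ∨ (G.fst e ∉ S ∧ G.snd e ∈ S)}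

open Classical in
/-- The endpoint of `e` other than `s` (for `e` incident with `s`). -/
noncomputable def other (G : Multigraph V E) (s : V) (e : E) : V :=
  if G.fst e = s then G.snd e else G.fst e

open Classical in
/-- For an edge of `δ(S)`, its endpoint outside `S`. -/
noncomputable def outEnd (G : Multigraph V E) (S : Set V) (e : E) : V :=
  if G.fst e ∈ S then G.snd e else G.fst e

/-- Walks in a multigraph. -/
inductive Walk (G : Multigraph V E) : V → V → Type (max u v)
  | nil (x : V) : Walk G x x
  | cons {x y z : V} (e : E) (h : G.Inc e x y) (p : Walk G y z) : Walk G x z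

namespace Walk

variable {G : Multigraph V E}

/-- The list of edges used by a walk. -/
def edges : ∀ {x y : V}, G.Walk x y → List E
  | _, _, .nil _ => []
  | _, _, .cons e _ p => e :: edges p

/-- The list of vertices visited by a walk. -/
def support : ∀ {x y : V}, G.Walk x y → List V
  | _, y, .nil _ => [y]
  | x, _, .cons _ _ p => x :: support p

/-- A walk is a path if it has no repeated vertices. -/
def IsPath {x y : V} (p : G.Walk x y) : Prop := p.support.Nodup

end Walk

/-- There are `k` pairwise edge-disjoint paths from `x` to `y`. -/
def EdgeDisjointPaths (G : Multigraph V E) (k : ℕ) (x y : V) : Prop :=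
  ∃ P : Fin k → G.Walk x y,
    (∀ i, (P i).IsPath) ∧ ∀ i j, i ≠ j → List.Disjoint (P i).edges (P j).edges

/-- `G` is `k`-edge-connected: between any two distinct vertices there are `k`
pairwise edge-disjoint paths. -/
def EdgeConnected (G : Multigraph V E) (k : ℕ) : Prop :=
  ∀ x y : V, x ≠ y → G.EdgeDisjointPaths k x y

/-- `G` is `(s,k)`-edge-connected: between any two distinct vertices different from `s`
there are `k` pairwise edge-disjoint paths (possibly through `s`). -/
def SEdgeConnected (G : Multigraph V E) (s : V) (k : ℕ) : Prop :=
  ∀ x y : V, x ≠ s → y ≠ s → x ≠ y → G.EdgeDisjointPaths k x y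

/-- An orientation of `G` assigns to each edge a tail and a head (its two endpoints). -/
structure Orientation (G : Multigraph V E) where
  tail : E → V
  head : E → V
  inc : ∀ e, G.Inc e (tail e) (head e)

namespace Orientation

variable {G : Multigraph V E}

/-- Directed walks with respect to an orientation. -/
inductive DiWalk (o : G.Orientation) : V → V → Type (max u v)
  | nil (x : V) : DiWalk o x x
  | cons {x y z : V} (e : E) (ht : o.tail e = x) (hh : o.head e = y) (p : DiWalk o y z) :
      DiWalk o x z

namespace DiWalk

variable {o : G.Orientation}

/-- The list of arcs used by a directed walk. -/
def edges : ∀ {x y : V}, o.DiWalk x y → List E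
  | _, _, .nil _ => []
  | _, _, .cons e _ _ p => e :: edges p

/-- The list of vertices visited by a directed walk. -/
def support : ∀ {x y : V}, o.DiWalk x y → List V
  | _, y, .nil _ => [y]
  | x, _, .cons _ _ _ p => x :: support p

/-- A directed walk is a directed path if it has no repeated vertices. -/
def IsPath {x y : V} (p : o.DiWalk x y) : Prop := p.support.Nodup

end DiWalk

/-- An orientation is `k`-arc-connected if from any vertex to any other there are `k`
pairwise arc-disjoint directed paths. -/
def ArcConnected (o : G.Orientation) (k : ℕ) : Prop :=
  ∀ x y : V, ∃ P : Fin k → o.DiWalk x y,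
    (∀ i, (P i).IsPath) ∧ ∀ i j, i ≠ j → List.Disjoint (P i).edges (P j).edges

end Orientation

/-- A ray: a one-way infinite path. -/
structure Ray (G : Multigraph V E) where
  vert : ℕ → V
  edge : ℕ → E
  inc : ∀ n, G.Inc (edge n) (vert n) (vert (n + 1))
  inj : Function.Injective vert

/-- Two rays are edge-disjoint. -/
def Ray.EdgeDisjoint {G : Multigraph V E} (R R' : G.Ray) : Prop :=
  ∀ m n, R.edge m ≠ R'.edge n

/-- A walk is edge-disjoint from a ray. -/
def Walk.EdgeDisjointRay {G : Multigraph V E} {x y : V} (p : G.Walk x y) (R : G.Ray) : Prop :=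
  ∀ e ∈ p.edges, ∀ n, R.edge n ≠ e

/-- Two rays are equivalent (belong to the same end) if there are infinitely many
pairwise vertex-disjoint paths between them. -/
def RayEquiv (G : Multigraph V E) (R R' : G.Ray) : Prop :=
  ∃ P : ℕ → (Σ (m n : ℕ), G.Walk (R.vert m) (R'.vert n)),
    (∀ i, (P i).2.2.IsPath) ∧
      ∀ i j, i ≠ j → List.Disjoint (P i).2.2.support (P j).2.2.support

/-- A graph is one-ended if it has a ray and any two rays are equivalent. -/
def OneEnded (G : Multigraph V E) : Prop :=
  Nonempty G.Ray ∧ ∀ R R' : G.Ray, G.RayEquiv R R'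

end Multigraph
namespace Multigraph

/-- The graph `G − S` obtained by deleting the vertices of `S` (and all incident edges). -/
def deleteVerts {V : Type u} {E : Type v} (G : Multigraph V E) (S : Set V) :
    Multigraph {x : V // x ∉ S} {e : E // G.fst e ∉ S ∧ G.snd e ∉ S} where
  fst e := ⟨G.fst e.1, e.2.1⟩
  snd e := ⟨G.snd e.1, e.2.2⟩
  loopless e h := G.loopless e.1 (congrArg Subtype.val h)

end Multigraph

namespace Multigraph

variable {V : Type u} {E : Type v} {G : Multigraph V E}

section Inc

variable {e : E} {a b c : V}

lemma Inc.symm (h : G.Inc e a b) : G.Inc e b a := Or.symm h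

lemma Inc.incVert_left (h : G.Inc e a b) : G.IncVert a e :=
  h.imp And.left And.right

lemma Inc.incVert_right (h : G.Inc e a b) : G.IncVert b e :=
  h.symm.incVert_left

lemma Inc.right_unique (h : G.Inc e a b) (h' : G.Inc e a c) : b = c := by
  have := G.loopless e
  unfold Inc at h h'
  grind

end Inc

namespace Walk

lemma start_mem_support : ∀ {x y : V} (p : G.Walk x y), x ∈ p.support
  | _, _, .nil x => List.mem_singleton_self x
  | _, _, .cons _ _ _ => List.mem_cons_self

lemma IsPath.exists_two_edges_incVert {s x y : V} {p : G.Walk x y} (hp : p.IsPath)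
    (hx : x ≠ s) (hy : y ≠ s) (hs : s ∈ p.support) :
    ∃ e₁ ∈ p.edges, ∃ e₂ ∈ p.edges, e₁ ≠ e₂ ∧ G.IncVert s e₁ ∧ G.IncVert s e₂ := by
  induction p with
  | nil => exact absurd (List.mem_singleton.mp hs).symm hx
  | @cons x m z e h q ih =>
    have hq : q.IsPath := (List.nodup_cons.mp hp).2
    by_cases hm : m = s
    · subst hm
      cases q with
      | nil => exact (hy rfl).elim
      | cons e' h' q' =>
        -- the edges entering and leaving `s` differ, as their other ends are distinct
        have hne : e ≠ e' := by
          rintro rfl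
          obtain rfl := h.symm.right_unique h'
          exact (List.nodup_cons.mp hp).1 (List.mem_cons_of_mem _ (start_mem_support q'))
        exact ⟨e, List.mem_cons_self, e', List.mem_cons_of_mem _ List.mem_cons_self, hne,
          h.incVert_right, h'.incVert_left⟩
    · have hs' : s ∈ q.support := (List.mem_cons.mp hs).resolve_left (Ne.symm hx)
      obtain ⟨e₁, h₁, e₂, h₂, hne, hs₁, hs₂⟩ := ih hq hm hy hs'
      exact ⟨e₁, List.mem_cons_of_mem _ h₁, e₂, List.mem_cons_of_mem _ h₂, hne, hs₁, hs₂⟩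

lemma IsPath.one_lt_ncard_edges_incVert {s x y : V} {p : G.Walk x y} (hp : p.IsPath)
    (hx : x ≠ s) (hy : y ≠ s) (hs : s ∈ p.support) :
    1 < {e | e ∈ p.edges ∧ G.IncVert s e}.ncard := by
  obtain ⟨e₁, h₁, e₂, h₂, hne, hs₁, hs₂⟩ := hp.exists_two_edges_incVert hx hy hs
  have hfin : {e | e ∈ p.edges ∧ G.IncVert s e}.Finite :=
    p.edges.finite_toSet.subset fun _ he => he.1
  exact (Set.one_lt_ncard_iff hfin).2 ⟨e₁, e₂, ⟨h₁, hs₁⟩, ⟨h₂, hs₂⟩, hne⟩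

lemma exists_deleteVerts_lift {S : Set V} {a b : V} (p : G.Walk a b) (ha : a ∉ S) (hb : b ∉ S)
    (hS : ∀ v ∈ p.support, v ∉ S) :
    ∃ q : (G.deleteVerts S).Walk ⟨a, ha⟩ ⟨b, hb⟩,
      q.edges.map Subtype.val = p.edges ∧ q.support.map Subtype.val = p.support := by
  induction p with
  | nil x => exact ⟨.nil _, rfl, rfl⟩
  | @cons x m z e h q ih =>
    have hm : m ∉ S := hS m (List.mem_cons_of_mem _ (start_mem_support q))
    have he : G.fst e ∉ S ∧ G.snd e ∉ S := by
      rcases h with ⟨h₁, h₂⟩ | ⟨h₁, h₂⟩ <;> simp_all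
    have h' : (G.deleteVerts S).Inc ⟨e, he⟩ ⟨x, ha⟩ ⟨m, hm⟩ := by
      simpa [Inc, deleteVerts] using h
    obtain ⟨q', hedges, hsupport⟩ := ih hm hb fun v hv => hS v (List.mem_cons_of_mem _ hv)
    exact ⟨.cons _ h' q', by simp [edges, hedges], by simp [support, hsupport]⟩

end Walk

lemma Walk.IsPath.notMem_support_of_degree_le_three [Finite E] {s x y x' y' : V}
    (hdeg : G.degree s ≤ 3) {p : G.Walk x y} {q : G.Walk x' y'} (hp : p.IsPath)
    (hq : q.IsPath) (hx : x ≠ s) (hy : y ≠ s) (hx' : x' ≠ s) (hy' : y' ≠ s)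
    (hpq : p.edges.Disjoint q.edges) (hs : s ∈ p.support) : s ∉ q.support := by
  intro hs'
  have hdisj : Disjoint {e | e ∈ p.edges ∧ G.IncVert s e} {e | e ∈ q.edges ∧ G.IncVert s e} :=
    Set.disjoint_left.2 fun _ he he' => hpq he.1 he'.1
  have hsub : {e | e ∈ p.edges ∧ G.IncVert s e} ∪ {e | e ∈ q.edges ∧ G.IncVert s e} ⊆
      {e | G.IncVert s e} := Set.union_subset (fun _ he => he.2) (fun _ he => he.2)
  have hle := Set.ncard_le_ncard hsub
  rw [Set.ncard_union_eq hdisj] at hle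
  have := hp.one_lt_ncard_edges_incVert hx hy hs
  have := hq.one_lt_ncard_edges_incVert hx' hy' hs'
  unfold degree at hdeg
  omega

lemma edgeDisjointPaths_deleteVerts_pred {s : V} {x y : {v // v ∉ ({s} : Set V)}} {k : ℕ}
    (P : Fin k → G.Walk x y) (hpath : ∀ i, (P i).IsPath)
    (hdisj : ∀ i j, i ≠ j → (P i).edges.Disjoint (P j).edges)
    (hs : ∀ i j, s ∈ (P i).support → s ∈ (P j).support → i = j) :
    (G.deleteVerts {s}).EdgeDisjointPaths (k - 1) x y := by
  cases k with
  | zero => exact ⟨Fin.elim0, fun i => i.elim0, fun i => i.elim0⟩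
  | succ k =>
    obtain ⟨i₀, hi₀⟩ : ∃ i₀, ∀ j, s ∈ (P j).support → j = i₀ := by
      by_cases h : ∃ i, s ∈ (P i).support
      · obtain ⟨i₀, hi₀⟩ := h
        exact ⟨i₀, fun j hj => hs j i₀ hj hi₀⟩
      · exact ⟨0, fun j hj => (h ⟨j, hj⟩).elim⟩
    have havoid : ∀ j, ∀ v ∈ (P (i₀.succAbove j)).support, v ∉ ({s} : Set V) :=
      fun j v hv hvs => Fin.succAbove_ne i₀ j (hi₀ _ (Set.mem_singleton_iff.mp hvs ▸ hv))
    choose Q hQe hQs using fun j =>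
      (P (i₀.succAbove j)).exists_deleteVerts_lift x.2 y.2 (havoid j)
    refine ⟨Q, fun j => ?_, fun i j hij e hei hej => ?_⟩
    · have := hpath (i₀.succAbove j)
      rw [Walk.IsPath, ← hQs j] at this
      exact this.of_map _
    · refine hdisj _ _ ((Fin.succAbove_right_injective (p := i₀)).ne hij) (a := e.1) ?_ ?_
      · rw [← hQe i]; exact List.mem_map_of_mem hei
      · rw [← hQe j]; exact List.mem_map_of_mem hej

end Multigraph

theorem delete_vertex_edgeConnected_general {V : Type u} {E : Type v} [Finite E]
    (G : Multigraph V E) (s : V) (k : ℕ) (hconn : G.SEdgeConnected s k)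
    (hdeg : G.degree s ≤ 3) :
    (∀ x y : V, x ≠ s → y ≠ s → x ≠ y → ∀ P : Fin k → G.Walk x y,
      (∀ i, (P i).IsPath) → (∀ i j, i ≠ j → List.Disjoint (P i).edges (P j).edges) →
      ∀ i j, s ∈ (P i).support → s ∈ (P j).support → i = j) ∧
    (G.deleteVerts {s}).EdgeConnected (k - 1) := by
  have hthrough : ∀ x y : V, x ≠ s → y ≠ s → x ≠ y → ∀ P : Fin k → G.Walk x y,
      (∀ i, (P i).IsPath) → (∀ i j, i ≠ j → List.Disjoint (P i).edges (P j).edges) →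
      ∀ i j, s ∈ (P i).support → s ∈ (P j).support → i = j := by
    intro x y hx hy _ P hpath hdisj i j hi hj
    by_contra hij
    exact (hpath i).notMem_support_of_degree_le_three hdeg (hpath j) hx hy hx hy
      (hdisj i j hij) hi hj
  refine ⟨hthrough, fun x y hxy => ?_⟩
  have hxy' : x.1 ≠ y.1 := Subtype.coe_injective.ne hxy
  obtain ⟨P, hpath, hdisj⟩ := hconn x y x.2 y.2 hxy'
  exact Multigraph.edgeDisjointPaths_deleteVerts_pred P hpath hdisj
    (hthrough x y x.2 y.2 hxy' P hpath hdisj)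

/-- Let `k ≥ 1` and let `G` be a finite `(s,k)`-edge-connected graph
with `deg(s) ≤ 3` and at least two vertices other than `s`. Then for any two vertices
`x, y` different from `s`, at most one of any collection of `k` pairwise edge-disjoint
`x`–`y` paths in `G` passes through `s`; consequently the graph `G − s` is
`(k−1)`-edge-connected. -/
theorem delete_vertex_edgeConnected {V : Type u} {E : Type v} [Finite V] [Finite E]
    (G : Multigraph V E) (s : V) (k : ℕ) (hk : 1 ≤ k) (hconn : G.SEdgeConnected s k)
    (hdeg : G.degree s ≤ 3) (hcard : ∃ x y : V, x ≠ s ∧ y ≠ s ∧ x ≠ y) :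
    (∀ x y : V, x ≠ s → y ≠ s → x ≠ y → ∀ P : Fin k → G.Walk x y,
      (∀ i, (P i).IsPath) → (∀ i j, i ≠ j → List.Disjoint (P i).edges (P j).edges) →
      ∀ i j, s ∈ (P i).support → s ∈ (P j).support → i = j) ∧
    (G.deleteVerts {s}).EdgeConnected (k - 1) :=
  delete_vertex_edgeConnected_general G s k hconn hdeg
end

section
/- Let G be a finite (s,k)-edge-connected graph and let e, f, g, h be distinct edges incident with s. Suppose the pair {e, f} is not k-liftable in G and the pair {g, h} is k-liftable in G. Then {e, f} is not k-liftable in the graph obtained from G by lifting the pair {g, h}. In particular, if the complement of L(G, s, k) is connected and the lifting graph has an isolated vertex e*, then after lifting any k-liftable pair of the remaining edges, e* remains an isolated vertex of the new lifting graph and the complement of the new lifting graph remains connected. -/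
universe u v

/-- A multigraph on the vertex type `W`, with its edge type bundled. -/
structure GraphOn (W : Type u) : Type (u + 1) where
  E : Type u
  graph : Multigraph W E

namespace Multigraph

variable {W F : Type u}

/-- The graph obtained from `G` by lifting the pair of edges `e₁, e₂` at `s`:
delete `e₁` and `e₂`, and add an edge between their non-`s` endpoints if these differ
(nothing is added if they coincide). -/
noncomputable def lift (G : Multigraph W F) (s : W) (e₁ e₂ : F) : GraphOn W where
  E := {e : F // e ≠ e₁ ∧ e ≠ e₂} ⊕ {_p : PUnit.{u + 1} // G.other s e₁ ≠ G.other s e₂}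
  graph :=
    { fst := Sum.elim (fun e => G.fst e.1) fun _ => G.other s e₁
      snd := Sum.elim (fun e => G.snd e.1) fun _ => G.other s e₂
      loopless := by
        rintro (e | p)
        · exact G.loopless e.1
        · exact p.2 }

/-- The pair of edges `e₁, e₂` incident with `s` is `k`-liftable: after lifting it,
there are `k` pairwise edge-disjoint paths between any two vertices different from `s`. -/
def IsLiftable (G : Multigraph W F) (s : W) (k : ℕ) (e₁ e₂ : F) : Prop :=
  e₁ ≠ e₂ ∧ G.IncVert s e₁ ∧ G.IncVert s e₂ ∧ (G.lift s e₁ e₂).graph.SEdgeConnected s k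

/-- The `k`-lifting graph `L(G, s, k)`: vertices are the edges of `G` incident with `s`,
two being adjacent iff they form a `k`-liftable pair. -/
noncomputable def liftingGraph (G : Multigraph W F) (s : W) (k : ℕ) :
    SimpleGraph {e : F // G.IncVert s e} :=
  SimpleGraph.fromRel fun e f => G.IsLiftable s k e.1 f.1

end Multigraph

/-- `x` is an isolated vertex of the simple graph `L`. -/
def SimpleGraph.IsIsolatedVertex {α : Type*} (L : SimpleGraph α) (x : α) : Prop :=
  ∀ y, ¬ L.Adj x y

/-- `L` is the union of an isolated vertex and a balanced complete bipartite graph. -/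
def SimpleGraph.IsIsolatedPlusBalancedCompleteBipartite {α : Type*} (L : SimpleGraph α) : Prop :=
  ∃ (x : α) (A B : Set α),
    x ∉ A ∧ x ∉ B ∧ A ∩ B = ∅ ∧ A ∪ B = {x}ᶜ ∧ A.ncard = B.ncard ∧
      ∀ a b, L.Adj a b ↔ (a ∈ A ∧ b ∈ B) ∨ (a ∈ B ∧ b ∈ A)

/-!
Lifting `g, h` and then `e, f` gives the graph obtained from `G_ef` (lift `e, f` only) by also
lifting `g, h`, and lifting never creates edge-disjoint paths: the new edge `vw` can be replaced
by the path `v s w` through the two deleted edges. So if `{e, f}` became liftable after lifting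
`{g, h}`, it was liftable already in `G`. Hence an isolated vertex `e*` of `L(G, s, k)` stays
isolated, and a graph with an isolated vertex has a connected complement.
-/

namespace Multigraph

variable {V : Type*} {E E' : Type*}

lemma other_ne (G : Multigraph V E) (s : V) (e : E) : G.other s e ≠ s := by
  unfold other
  split_ifs with h
  · exact fun h' => G.loopless e (h.trans h'.symm)
  · exact h

lemma inc_other {G : Multigraph V E} {s : V} {e : E} (he : G.IncVert s e) :
    G.Inc e (G.other s e) s := by
  unfold other
  split_ifs with h
  · exact Or.inr ⟨h, rfl⟩
  · exact Or.inl ⟨rfl, he.resolve_left h⟩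

namespace Walk

variable {G : Multigraph V E}

def append : ∀ {x y z : V}, G.Walk x y → G.Walk y z → G.Walk x z
  | _, _, _, .nil _, q => q
  | _, _, _, .cons e h p, q => .cons e h (p.append q)

lemma edges_append {x y z : V} (p : G.Walk x y) (q : G.Walk y z) :
    (p.append q).edges = p.edges ++ q.edges := by
  induction p with
  | nil => rfl
  | cons e h p ih => exact congrArg (e :: ·) (ih q)

lemma exists_isPath_of_mem_support {x y u : V} (p : G.Walk x y) (hp : p.IsPath)
    (hu : u ∈ p.support) : ∃ r : G.Walk u y, r.IsPath ∧ ∀ b ∈ r.edges, b ∈ p.edges := by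
  induction p with
  | nil z =>
    obtain rfl : u = z := List.mem_singleton.mp hu
    exact ⟨.nil u, hp, fun _ hb => hb⟩
  | cons e he p ih =>
    rcases List.mem_cons.mp hu with rfl | hu
    · exact ⟨.cons e he p, hp, fun _ hb => hb⟩
    · obtain ⟨r, hr, hre⟩ := ih (List.nodup_cons.mp hp).2 hu
      exact ⟨r, hr, fun b hb => List.mem_cons_of_mem _ (hre b hb)⟩

lemma exists_isPath_edges_subset {x y : V} (p : G.Walk x y) :
    ∃ q : G.Walk x y, q.IsPath ∧ ∀ b ∈ q.edges, b ∈ p.edges := by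
  induction p with
  | nil z => exact ⟨.nil z, List.nodup_singleton z, fun _ hb => hb⟩
  | @cons x _ _ e he p ih =>
    obtain ⟨q, hq, hqe⟩ := ih
    by_cases hx : x ∈ q.support
    · obtain ⟨r, hr, hre⟩ := q.exists_isPath_of_mem_support hq hx
      exact ⟨r, hr, fun b hb => List.mem_cons_of_mem _ (hqe b (hre b hb))⟩
    · refine ⟨.cons e he q, List.nodup_cons.mpr ⟨hx, hq⟩, fun b hb => ?_⟩
      rcases List.mem_cons.mp hb with rfl | hb
      · exact List.mem_cons_self
      · exact List.mem_cons_of_mem _ (hqe b hb)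

end Walk

/-- A weak immersion of `H` into `G`: the edges of `H` are routed along pairwise edge-disjoint
walks of `G`. -/
structure Immersion (H : Multigraph V E') (G : Multigraph V E) where
  Carries : E' → E → Prop
  carries_unique : ∀ {a a' : E'} {b : E}, Carries a b → Carries a' b → a = a'
  route : ∀ {a : E'} {x y : V}, H.Inc a x y → ∃ w : G.Walk x y, ∀ b ∈ w.edges, Carries a b

namespace Immersion

variable {H : Multigraph V E'} {G : Multigraph V E} (φ : H.Immersion G)
include φ

lemma exists_walk {x y : V} (p : H.Walk x y) :
    ∃ q : G.Walk x y, ∀ b ∈ q.edges, ∃ a ∈ p.edges, φ.Carries a b := by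
  induction p with
  | nil z => exact ⟨.nil z, fun _ hb => absurd hb List.not_mem_nil⟩
  | cons a ha p ih =>
    obtain ⟨w, hw⟩ := φ.route ha
    obtain ⟨q, hq⟩ := ih
    refine ⟨w.append q, fun b hb => ?_⟩
    rcases List.mem_append.mp (Walk.edges_append w q ▸ hb) with hb | hb
    · exact ⟨a, List.mem_cons_self, hw b hb⟩
    · obtain ⟨a', ha', hab⟩ := hq b hb
      exact ⟨a', List.mem_cons_of_mem _ ha', hab⟩

lemma edgeDisjointPaths {k : ℕ} {x y : V} (hH : H.EdgeDisjointPaths k x y) :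
    G.EdgeDisjointPaths k x y := by
  obtain ⟨P, -, hP⟩ := hH
  choose Q hQ using fun i => φ.exists_walk (P i)
  choose R hR hRQ using fun i => (Q i).exists_isPath_edges_subset
  refine ⟨R, hR, fun i j hij b hbi hbj => ?_⟩
  obtain ⟨a, ha, hab⟩ := hQ i b (hRQ i b hbi)
  obtain ⟨a', ha', hab'⟩ := hQ j b (hRQ j b hbj)
  exact hP i j hij ha (φ.carries_unique hab hab' ▸ ha')

lemma sEdgeConnected {s : V} {k : ℕ} (hH : H.SEdgeConnected s k) : G.SEdgeConnected s k :=
  fun x y hx hy hxy => φ.edgeDisjointPaths (hH x y hx hy hxy)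

end Immersion

section Lift

variable {V E : Type u} {G : Multigraph V E} {s : V} {e f g h : E}

abbrev liftEdge (G : Multigraph V E) (s : V) (e f c : E) (hce : c ≠ e) (hcf : c ≠ f) :
    (G.lift s e f).E :=
  Sum.inl ⟨c, hce, hcf⟩

def liftLiftCarries (G : Multigraph V E) (s : V) (e f g h : E) (heg : e ≠ g) (heh : e ≠ h)
    (hfg : f ≠ g) (hfh : f ≠ h) :
    ((G.lift s g h).graph.lift s (G.liftEdge s g h e heg heh) (G.liftEdge s g h f hfg hfh)).E →
      (G.lift s e f).E → Prop
  | .inl ⟨.inl d, _⟩, .inl c => c.1 = d.1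
  | .inl ⟨.inr _, _⟩, .inl c => c.1 = g ∨ c.1 = h
  | .inr _, .inr _ => True
  | _, _ => False

def liftLiftImmersion (heg : e ≠ g) (heh : e ≠ h) (hfg : f ≠ g) (hfh : f ≠ h)
    (hg : G.IncVert s g) (hh : G.IncVert s h) :
    ((G.lift s g h).graph.lift s (G.liftEdge s g h e heg heh)
      (G.liftEdge s g h f hfg hfh)).graph.Immersion (G.lift s e f).graph where
  Carries := G.liftLiftCarries s e f g h heg heh hfg hfh
  carries_unique := by
    rintro (⟨⟨d, hd⟩ | ⟨⟨⟩, _⟩, _⟩ | ⟨⟨⟩, _⟩) (⟨⟨d', hd'⟩ | ⟨⟨⟩, _⟩, _⟩ | ⟨⟨⟩, _⟩)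
      (⟨c, _⟩ | ⟨⟨⟩, _⟩) hb hb' <;> simp only [liftLiftCarries] at hb hb' ⊢
    · subst hb hb'; rfl
    · subst hb; exact absurd hb' (not_or.mpr hd)
    · subst hb'; exact absurd hb (not_or.mpr hd')
    all_goals rfl
  route := by
    rintro (⟨⟨d, hdg, hdh⟩ | ⟨⟨⟩, _⟩, hne⟩ | ⟨⟨⟩, hef⟩) x y hxy
    · have hde : d ≠ e := by rintro rfl; exact hne.1 rfl
      have hdf : d ≠ f := by rintro rfl; exact hne.2 rfl
      exact ⟨.cons (G.liftEdge s e f d hde hdf) hxy (.nil y), fun b hb => by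
        obtain rfl := List.mem_singleton.mp hb; rfl⟩
    · -- the edge `vw` created by lifting `g, h` is rerouted along `v g s h w`
      have hg' := G.inc_other (s := s) hg
      have hh' := G.inc_other (s := s) hh
      let g' := G.liftEdge s e f g heg.symm hfg.symm
      let h' := G.liftEdge s e f h heh.symm hfh.symm
      rcases hxy with ⟨rfl, rfl⟩ | ⟨rfl, rfl⟩
      · refine ⟨.cons g' hg' (.cons h' (Or.symm hh') (.nil _)), fun b hb => ?_⟩
        rcases List.mem_pair.mp hb with rfl | rfl
        exacts [Or.inl rfl, Or.inr rfl]
      · refine ⟨.cons h' hh' (.cons g' (Or.symm hg') (.nil _)), fun b hb => ?_⟩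
        rcases List.mem_pair.mp hb with rfl | rfl
        exacts [Or.inr rfl, Or.inl rfl]
    · exact ⟨.cons (.inr ⟨PUnit.unit, hef⟩) hxy (.nil y), fun b hb => by
      obtain rfl := List.mem_singleton.mp hb; trivial⟩

lemma isLiftable_of_isLiftable_lift {k : ℕ} (heg : e ≠ g) (heh : e ≠ h) (hfg : f ≠ g)
    (hfh : f ≠ h) (hg : G.IncVert s g) (hh : G.IncVert s h)
    (hL : (G.lift s g h).graph.IsLiftable s k (G.liftEdge s g h e heg heh)
      (G.liftEdge s g h f hfg hfh)) :
    G.IsLiftable s k e f :=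
  ⟨by rintro rfl; exact hL.1 rfl, hL.2.1, hL.2.2.1,
    (liftLiftImmersion heg heh hfg hfh hg hh).sEdgeConnected hL.2.2.2⟩

lemma liftingGraph_adj {k : ℕ} (hL : G.IsLiftable s k e f) :
    (G.liftingGraph s k).Adj ⟨e, hL.2.1⟩ ⟨f, hL.2.2.1⟩ :=
  SimpleGraph.fromRel_adj _ _ _ |>.mpr ⟨fun hef => hL.1 (congrArg Subtype.val hef), Or.inl hL⟩

lemma isIsolatedVertex_liftingGraph_lift {k : ℕ} {x : {e : E // G.IncVert s e}}
    (hx : (G.liftingGraph s k).IsIsolatedVertex x) (hg : g ≠ x.1) (hh : h ≠ x.1)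
    (hgI : G.IncVert s g) (hhI : G.IncVert s h) :
    ((G.lift s g h).graph.liftingGraph s k).IsIsolatedVertex
      ⟨G.liftEdge s g h x.1 hg.symm hh.symm, x.2⟩ := by
  rintro ⟨⟨d, hdg, hdh⟩ | ⟨⟨⟩, _⟩, hd⟩ hadj
  · rcases (SimpleGraph.fromRel_adj _ _ _).mp hadj |>.2 with hL | hL
    · exact hx _ (liftingGraph_adj
        (isLiftable_of_isLiftable_lift hg.symm hh.symm hdg hdh hgI hhI hL))
    · exact hx _ (liftingGraph_adj
        (isLiftable_of_isLiftable_lift hdg hdh hg.symm hh.symm hgI hhI hL)).symm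
  · exact Or.elim hd (G.other_ne s g) (G.other_ne s h)

end Lift

end Multigraph

lemma SimpleGraph.IsIsolatedVertex.connected_compl {α : Type*} {L : SimpleGraph α} {x : α}
    (hx : L.IsIsolatedVertex x) : Lᶜ.Connected := by
  refine (connected_iff_exists_forall_reachable _).mpr ⟨x, fun y => ?_⟩
  rcases eq_or_ne x y with rfl | hxy
  · rfl
  · exact ((compl_adj L x y).mpr ⟨hxy, hx y⟩).reachable

theorem not_liftable_after_lift_general {V E : Type} (G : Multigraph V E)
    (s : V) (k : ℕ) :
    (∀ (e f g h : E) (hef : e ≠ f) (heg : e ≠ g) (heh : e ≠ h) (hfg : f ≠ g)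
        (hfh : f ≠ h) (hgh : g ≠ h),
      G.IncVert s e → G.IncVert s f → G.IncVert s g → G.IncVert s h →
      ¬ G.IsLiftable s k e f → G.IsLiftable s k g h →
      ¬ (G.lift s g h).graph.IsLiftable s k (Sum.inl ⟨e, heg, heh⟩) (Sum.inl ⟨f, hfg, hfh⟩)) ∧
    ((G.liftingGraph s k)ᶜ.Connected →
      ∀ (estar : {e : E // G.IncVert s e}),
        (G.liftingGraph s k).IsIsolatedVertex estar →
        ∀ (g h : E) (hg : g ≠ estar.1) (hh : h ≠ estar.1) (hgh : g ≠ h),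
          G.IsLiftable s k g h →
          ((G.lift s g h).graph.liftingGraph s k).IsIsolatedVertex
              ⟨Sum.inl ⟨estar.1, hg.symm, hh.symm⟩, estar.2⟩ ∧
            (((G.lift s g h).graph.liftingGraph s k)ᶜ).Connected) := by
  refine ⟨fun e f g h _ heg heh hfg hfh _ _ _ hg hh hnot _ hL =>
    hnot (Multigraph.isLiftable_of_isLiftable_lift heg heh hfg hfh hg hh hL), ?_⟩
  intro _ estar hiso g h hg hh _ hL
  have hiso' := Multigraph.isIsolatedVertex_liftingGraph_lift hiso hg hh hL.2.1 hL.2.2.1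
  exact ⟨hiso', hiso'.connected_compl⟩

/-- Non-liftable pairs stay non-liftable after lifting a liftable pair;
in particular, if the complement of `L(G,s,k)` is connected and `e*` is an isolated
vertex of the lifting graph, then after lifting any `k`-liftable pair of the remaining
edges, `e*` remains isolated and the complement of the new lifting graph remains
connected. -/
theorem not_liftable_after_lift {V E : Type} [Finite V] [Finite E] (G : Multigraph V E)
    (s : V) (k : ℕ) (hconn : G.SEdgeConnected s k) :
    (∀ (e f g h : E) (hef : e ≠ f) (heg : e ≠ g) (heh : e ≠ h) (hfg : f ≠ g)
        (hfh : f ≠ h) (hgh : g ≠ h),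
      G.IncVert s e → G.IncVert s f → G.IncVert s g → G.IncVert s h →
      ¬ G.IsLiftable s k e f → G.IsLiftable s k g h →
      ¬ (G.lift s g h).graph.IsLiftable s k (Sum.inl ⟨e, heg, heh⟩) (Sum.inl ⟨f, hfg, hfh⟩)) ∧
    ((G.liftingGraph s k)ᶜ.Connected →
      ∀ (estar : {e : E // G.IncVert s e}),
        (G.liftingGraph s k).IsIsolatedVertex estar →
        ∀ (g h : E) (hg : g ≠ estar.1) (hh : h ≠ estar.1) (hgh : g ≠ h),
          G.IsLiftable s k g h →
          ((G.lift s g h).graph.liftingGraph s k).IsIsolatedVertex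
              ⟨Sum.inl ⟨estar.1, hg.symm, hh.symm⟩, estar.2⟩ ∧
            (((G.lift s g h).graph.liftingGraph s k)ᶜ).Connected) :=
  not_liftable_after_lift_general G s k
end
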